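/- Let M ≥ 0. For every n ≥ 1 the polynomial A_n has at least one real zero and every real zero of A_n is positive; moreover, denoting by μ_{1,n} the smallest real zero of A_n, every real polynomial p of degree at most n satisfies ∫_0^∞ p'(x)²·e^{-x} dx ≤ (1/μ_{1,n})·(∫_0^∞ p(x)²·e^{-x} dx + M·p(0)²). -/

import Mathlib

open Polynomial MeasureTheory

/-- The polynomials `A_n(λ)` of the Laguerre case (b):
`A_0 = 1`, `A_1(λ) = λ - (1+2M)/(1+M)`, and `A_n(λ) = (λ-2)·A_{n-1}(λ) - A_{n-2}(λ)` for `n ≥ 2`. -/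
noncomputable def ApolyB (M : ℝ) : ℕ → Polynomial ℝ
  | 0 => 1
  | 1 => Polynomial.X - Polynomial.C ((1 + 2 * M) / (1 + M))
  | n + 2 => (Polynomial.X - Polynomial.C 2) * ApolyB M (n + 1) - ApolyB M n

/-!
Write `p = ∑ bₖ Lₖ` in the Laguerre polynomials `Lₖ`, which are orthonormal for `e^{-x} dx` on
`(0, ∞)`, take the value `1` at `0` and satisfy `Lₖ' = -(L₀ + ⋯ + Lₖ₋₁)`. With
`aⱼ = bⱼ₊₁ + ⋯ + bₙ` the claim becomes `μ ∑ aⱼ² ≤ ∑ bₖ² + M (b₀ + a₀)²`; minimising over `b₀`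
leaves `μ ‖a‖² ≤ aᵀ J a` for the tridiagonal matrix `J` with diagonal `((1+2M)/(1+M), 2, …, 2)`
and off-diagonal `-1`, whose characteristic polynomials are the `Aₖ`. The leading principal minors
of `J - μ` are `(-1)ᵏ Aₖ(μ)`. They are positive for `k < n`, because the smallest zeros of
`A₁, A₂, …` strictly decrease, so the LDLᵀ decomposition of `J - μ` writes `aᵀ (J - μ) a` as a
sum of squares. For `t ≤ 0` the recurrence keeps `(-1)ᵏ Aₖ(t) ≥ 1`, so all zeros are positive.
-/

open Finset
open scoped Nat

noncomputable def laguerre (n : ℕ) : ℝ[X] :=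
  ∑ k ∈ range (n + 1), C ((-1 : ℝ) ^ k * n.choose k / k !) * X ^ k

lemma coeff_laguerre (n j : ℕ) : (laguerre n).coeff j = (-1 : ℝ) ^ j * n.choose j / j ! := by
  rw [laguerre, finsetSum_coeff]
  simp only [coeff_C_mul_X_pow]
  rw [sum_eq_single j (fun k _ hk => if_neg hk.symm)]
  · simp
  · intro hj
    simp [Nat.choose_eq_zero_of_lt (by simpa using hj : n < j)]

lemma degree_laguerre (n : ℕ) : (laguerre n).degree = n := by
  refine degree_eq_of_le_of_coeff_ne_zero ?_ (by simp [coeff_laguerre, Nat.factorial_ne_zero])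
  refine (degree_le_iff_coeff_zero _ _).2 fun m hm => ?_
  simp [coeff_laguerre, Nat.choose_eq_zero_of_lt (by exact_mod_cast hm : n < m)]

lemma eval_zero_laguerre (n : ℕ) : (laguerre n).eval 0 = 1 := by
  simp [← coeff_zero_eq_eval_zero, coeff_laguerre]

lemma derivative_laguerre_succ (n : ℕ) :
    derivative (laguerre (n + 1)) = derivative (laguerre n) - laguerre n := by
  ext j
  simp only [coeff_derivative, coeff_sub, coeff_laguerre, Nat.choose_succ_succ n j,
    Nat.factorial_succ, Nat.cast_add, Nat.cast_mul, Nat.cast_succ]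
  field_simp
  ring

lemma derivative_laguerre (n : ℕ) : derivative (laguerre n) = -∑ j ∈ range n, laguerre j := by
  induction n with
  | zero => simp [laguerre]
  | succ n ih => rw [derivative_laguerre_succ, ih, sum_range_succ]; ring

lemma exists_laguerre_expansion {n : ℕ} {p : ℝ[X]} (hp : p.degree ≤ n) :
    ∃ b : ℕ → ℝ, p = ∑ k ∈ range (n + 1), b k • laguerre k := by
  let L : Polynomial.Sequence ℝ := ⟨laguerre, degree_laguerre⟩
  have hspan : p ∈ Submodule.span ℝ (L '' Set.Iic n) := by
    rw [L.span_degreeLE fun i _ => (leadingCoeff_ne_zero.2 (L.ne_zero i)).isUnit]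
    exact mem_degreeLE.2 hp
  obtain ⟨l, hl, rfl⟩ := (Finsupp.mem_span_image_iff_linearCombination ℝ).1 hspan
  refine ⟨l, ?_⟩
  rw [Finsupp.linearCombination_apply, Finsupp.sum_of_support_subset l (s := range (n + 1))
    (fun k hk => by simpa [Nat.lt_succ_iff] using hl hk) (fun i a => a • L i)
    (fun _ _ => zero_smul ℝ _)]

noncomputable def expMoment : ℝ[X] →ₗ[ℝ] ℝ := lsum fun i => (i ! : ℝ) • LinearMap.id

lemma expMoment_C_mul_X_pow (a : ℝ) (i : ℕ) : expMoment (C a * X ^ i) = a * i ! := by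
  rw [C_mul_X_pow_eq_monomial, expMoment, lsum_apply, sum_monomial_index _ _ (by simp)]
  simp [mul_comm]

lemma integrableOn_pow_mul_exp_neg (i : ℕ) :
    IntegrableOn (fun x : ℝ => x ^ i * Real.exp (-x)) (Set.Ioi 0) :=
  (Real.GammaIntegral_convergent (s := i + 1) (by positivity)).congr_fun
    (fun x _ => by simp [mul_comm]) measurableSet_Ioi

lemma integral_pow_mul_exp_neg (i : ℕ) :
    ∫ x in Set.Ioi (0 : ℝ), x ^ i * Real.exp (-x) = i ! := by
  rw [← Real.Gamma_nat_eq_factorial, Real.Gamma_eq_integral (by positivity)]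
  exact setIntegral_congr_fun measurableSet_Ioi fun x _ => by simp [mul_comm]

lemma integrableOn_eval_mul_exp_neg (p : ℝ[X]) :
    IntegrableOn (fun x => p.eval x * Real.exp (-x)) (Set.Ioi 0) := by
  induction p using Polynomial.induction_on' with
  | add p q hp hq =>
    simp only [eval_add, add_mul]
    exact hp.add hq
  | monomial i a =>
    simp only [← C_mul_X_pow_eq_monomial, eval_mul, eval_C, eval_pow, eval_X, mul_assoc]
    exact (integrableOn_pow_mul_exp_neg i).const_mul a

lemma integral_eval_mul_exp_neg (p : ℝ[X]) :
    ∫ x in Set.Ioi (0 : ℝ), p.eval x * Real.exp (-x) = expMoment p := by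
  induction p using Polynomial.induction_on' with
  | add p q hp hq =>
    simp only [eval_add, add_mul, map_add]
    rw [integral_add (integrableOn_eval_mul_exp_neg p) (integrableOn_eval_mul_exp_neg q), hp, hq]
  | monomial i a =>
    simp only [← C_mul_X_pow_eq_monomial, eval_mul, eval_C, eval_pow, eval_X, mul_assoc,
      expMoment_C_mul_X_pow]
    rw [integral_const_mul, integral_pow_mul_exp_neg]

lemma sum_neg_one_pow_mul_choose_mul_eq_fwdDiff_iter (f : ℝ → ℝ) (y : ℝ) (n : ℕ) :
    ∑ k ∈ range (n + 1), (-1 : ℝ) ^ k * n.choose k * f (y + k) =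
      (-1) ^ n * (fwdDiff 1)^[n] f y := by
  rw [fwdDiff_iter_eq_sum_shift, mul_sum]
  refine sum_congr rfl fun k hk => ?_
  have hsign : (-1 : ℝ) ^ n = (-1) ^ k * (-1) ^ (n - k) := by
    rw [← pow_add, Nat.add_sub_cancel' (Nat.lt_succ_iff.1 (mem_range.1 hk))]
  rw [hsign, zsmul_eq_mul, nsmul_one]
  have hsq : (-1 : ℝ) ^ (n - k) * (-1) ^ (n - k) = 1 := by rw [← mul_pow]; norm_num
  push_cast
  linear_combination (-((-1 : ℝ) ^ k * n.choose k * f (y + k))) * hsq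

/- The `k`-th summand carries `(k + m)! / k! = (k + 1) ⋯ (k + m)`, a polynomial of degree `m` in
`k`, so the alternating binomial sum is an `n`-th forward difference of it. -/
lemma expMoment_laguerre_mul_X_pow (n m : ℕ) :
    expMoment (laguerre n * X ^ m) = (-1) ^ n * (fwdDiff 1)^[n] (ascPochhammer ℝ m).eval 1 := by
  rw [laguerre, sum_mul, map_sum, ← sum_neg_one_pow_mul_choose_mul_eq_fwdDiff_iter]
  refine sum_congr rfl fun k _ => ?_
  have hfact : (k ! : ℝ) * (ascPochhammer ℝ m).eval (1 + (k : ℝ)) = (k + m) ! := by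
    rw [add_comm (1 : ℝ), ← Nat.cast_succ, ascPochhammer_nat_eq_natCast_ascFactorial]
    exact_mod_cast Nat.factorial_mul_ascFactorial k m
  rw [mul_assoc, ← pow_add, expMoment_C_mul_X_pow, ← hfact]
  field_simp

lemma expMoment_laguerre_mul_X_pow_of_lt {m n : ℕ} (h : m < n) :
    expMoment (laguerre n * X ^ m) = 0 := by
  rw [expMoment_laguerre_mul_X_pow, fwdDiff_iter_eq_zero_of_degree_lt (by simpa using h)]
  simp

lemma expMoment_laguerre_mul_X_pow_self (n : ℕ) :
    expMoment (laguerre n * X ^ n) = (-1) ^ n * n ! := by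
  have h := (ascPochhammer ℝ n).fwdDiff_iter_degree_eq_factorial
  rw [ascPochhammer_natDegree, (monic_ascPochhammer ℝ n).leadingCoeff, one_smul] at h
  rw [expMoment_laguerre_mul_X_pow, h]
  simp

lemma expMoment_laguerre_mul_laguerre_of_le {m n : ℕ} (h : m ≤ n) :
    expMoment (laguerre m * laguerre n) = if m = n then 1 else 0 := by
  have hterm (k : ℕ) (c : ℝ) :
      expMoment (C c * X ^ k * laguerre n) = c * expMoment (laguerre n * X ^ k) := by
    rw [← smul_eq_mul c, ← map_smul, smul_eq_C_mul]; ring_nf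
  nth_rw 1 [laguerre]
  simp only [sum_mul, map_sum, hterm]
  split_ifs with hmn
  · subst hmn
    rw [sum_range_succ, sum_eq_zero fun k hk => by
      rw [expMoment_laguerre_mul_X_pow_of_lt (mem_range.1 hk), mul_zero]]
    rw [expMoment_laguerre_mul_X_pow_self]
    field_simp
    rw [Nat.choose_self, ← pow_mul, pow_mul', neg_one_sq]
    simp
  · exact sum_eq_zero fun k hk => by
      rw [expMoment_laguerre_mul_X_pow_of_lt (by have := mem_range.1 hk; omega), mul_zero]

lemma expMoment_laguerre_mul_laguerre (m n : ℕ) :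
    expMoment (laguerre m * laguerre n) = if m = n then 1 else 0 := by
  rcases le_total m n with h | h
  · exact expMoment_laguerre_mul_laguerre_of_le h
  · rw [mul_comm, expMoment_laguerre_mul_laguerre_of_le h]
    exact if_congr eq_comm rfl rfl

lemma expMoment_sq_sum_smul_laguerre (s : Finset ℕ) (b : ℕ → ℝ) :
    expMoment ((∑ k ∈ s, b k • laguerre k) ^ 2) = ∑ k ∈ s, b k ^ 2 := by
  simp_rw [sq, sum_mul_sum, map_sum, smul_mul_smul_comm, map_smul, expMoment_laguerre_mul_laguerre,
    smul_eq_mul, mul_ite, mul_one, mul_zero, sum_ite_eq]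
  exact sum_congr rfl fun k hk => if_pos hk

lemma exists_isLeast_setOf_eval_eq_zero {p : ℝ[X]} (hp : p ≠ 0) (h : ∃ x, p.eval x = 0) :
    ∃ μ, IsLeast {x | p.eval x = 0} μ := by
  obtain ⟨μ, hμ, hmin⟩ := Set.exists_min_image _ id (finite_setOfPred_isRoot hp) h
  exact ⟨μ, hμ, hmin⟩

noncomputable def signedApolyB (M : ℝ) (k : ℕ) (t : ℝ) : ℝ := (-1) ^ k * (ApolyB M k).eval t

section signedApolyB

variable {M t : ℝ} {k : ℕ}

lemma signedApolyB_zero : signedApolyB M 0 t = 1 := by simp [signedApolyB, ApolyB]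

lemma signedApolyB_one : signedApolyB M 1 t = (1 + 2 * M) / (1 + M) - t := by
  simp [signedApolyB, ApolyB]

lemma signedApolyB_add_two :
    signedApolyB M (k + 2) t = (2 - t) * signedApolyB M (k + 1) t - signedApolyB M k t := by
  simp only [signedApolyB, ApolyB, eval_sub, eval_mul, eval_X, eval_C]
  ring

lemma signedApolyB_eq_zero_iff : signedApolyB M k t = 0 ↔ (ApolyB M k).eval t = 0 := by
  simp [signedApolyB]

lemma continuous_signedApolyB : Continuous (signedApolyB M k) :=
  continuous_const.mul (ApolyB M k).continuous

lemma one_le_signedApolyB_of_nonpos (hM : 0 ≤ M) (ht : t ≤ 0) (k : ℕ) :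
    1 ≤ signedApolyB M k t ∧ signedApolyB M k t ≤ signedApolyB M (k + 1) t := by
  induction k with
  | zero =>
    have : 1 ≤ (1 + 2 * M) / (1 + M) := by rw [le_div_iff₀ (by linarith)]; linarith
    rw [signedApolyB_zero, signedApolyB_one]
    constructor <;> linarith
  | succ k ih =>
    obtain ⟨h1, h2⟩ := ih
    refine ⟨h1.trans h2, ?_⟩
    rw [signedApolyB_add_two]
    nlinarith

lemma pos_of_eval_ApolyB_eq_zero (hM : 0 ≤ M) (hx : (ApolyB M k).eval t = 0) : 0 < t := by
  by_contra! ht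
  have := (one_le_signedApolyB_of_nonpos hM ht k).1
  rw [signedApolyB_eq_zero_iff.2 hx] at this
  linarith

lemma signedApolyB_pos_of_lt_isLeast (hM : 0 ≤ M) {μ : ℝ}
    (hμ : IsLeast {x | (ApolyB M k).eval x = 0} μ) (ht : t < μ) : 0 < signedApolyB M k t := by
  by_contra! hle
  rcases le_or_gt t 0 with ht0 | ht0
  · linarith [(one_le_signedApolyB_of_nonpos hM ht0 k).1]
  have h0 := (one_le_signedApolyB_of_nonpos hM le_rfl k).1
  obtain ⟨y, hy, hy0⟩ := intermediate_value_Icc' ht0.le continuous_signedApolyB.continuousOn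
    ⟨hle, by linarith⟩
  exact (hμ.2 (signedApolyB_eq_zero_iff.1 hy0)).not_gt (hy.2.trans_lt ht)

lemma exists_isLeast_roots_ApolyB (hM : 0 ≤ M) (n : ℕ) :
    ∃ μ, IsLeast {x | (ApolyB M (n + 1)).eval x = 0} μ ∧
      ∀ j ≤ n, ∀ t ≤ μ, 0 < signedApolyB M j t := by
  induction n with
  | zero =>
    refine ⟨(1 + 2 * M) / (1 + M), ⟨by simp [ApolyB], fun x hx => ?_⟩, fun j hj t _ => ?_⟩
    · simp only [ApolyB, Set.mem_ofPred_eq, eval_sub, eval_X, eval_C, sub_eq_zero] at hx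
      exact hx.ge
    · rw [Nat.le_zero.1 hj, signedApolyB_zero]
      exact one_pos
  | succ n ih =>
    obtain ⟨ν, hν, hpos⟩ := ih
    -- at the smallest zero `ν` of `Aₙ₊₁` the recurrence makes `Aₙ₊₂` change sign on `[0, ν]`
    have hν_neg : signedApolyB M (n + 2) ν < 0 := by
      rw [signedApolyB_add_two, signedApolyB_eq_zero_iff.2 hν.1]
      linarith [hpos n le_rfl ν le_rfl]
    have h0 := (one_le_signedApolyB_of_nonpos hM le_rfl (n + 2)).1
    obtain ⟨x, hx, hx0⟩ := intermediate_value_Icc' (pos_of_eval_ApolyB_eq_zero hM hν.1).le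
      continuous_signedApolyB.continuousOn ⟨hν_neg.le, by linarith⟩
    have hA : ApolyB M (n + 2) ≠ 0 := fun h => by simp [signedApolyB, h] at h0; linarith
    obtain ⟨μ, hμ⟩ := exists_isLeast_setOf_eval_eq_zero hA ⟨x, signedApolyB_eq_zero_iff.1 hx0⟩
    have hμν : μ < ν := (hμ.2 (signedApolyB_eq_zero_iff.1 hx0)).trans_lt
      (hx.2.lt_of_ne (by rintro rfl; linarith))
    refine ⟨μ, hμ, fun j hj t ht => ?_⟩
    rcases hj.lt_or_eq with hj | rfl
    · exact hpos j (Nat.lt_succ_iff.1 hj) t (ht.trans hμν.le)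
    · exact signedApolyB_pos_of_lt_isLeast hM hν (ht.trans_lt hμν)

end signedApolyB

/-- `aᵀ J a` when `a n = 0`, for the `n × n` tridiagonal matrix `J` with diagonal `(c, 2, …, 2)`
and off-diagonal `-1`. -/
def jacobiForm (c : ℝ) (a : ℕ → ℝ) (n : ℕ) : ℝ :=
  (c - 1) * a 0 ^ 2 + ∑ k ∈ range n, (a (k + 1) - a k) ^ 2

section JacobiForm

variable {μ c : ℝ} {P : ℕ → ℝ}

/- The LDLᵀ decomposition of `J - μ`: its pivots are the ratios `P (k + 1) / P k` of consecutive
leading principal minors. -/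
lemma jacobiForm_add_sq_sub_mul_sum_sq (hP0 : P 0 = 1) (hP1 : P 1 = c - μ)
    (hrec : ∀ k, P (k + 2) = (2 - μ) * P (k + 1) - P k) (a : ℕ → ℝ) {j : ℕ}
    (hP : ∀ k ≤ j, P k ≠ 0) :
    jacobiForm c a j + a j ^ 2 - μ * ∑ k ∈ range (j + 1), a k ^ 2 =
      ∑ k ∈ range j, (P (k + 1) * a k - P k * a (k + 1)) ^ 2 / (P k * P (k + 1))
        + P (j + 1) / P j * a j ^ 2 := by
  induction j with
  | zero => simp [jacobiForm, hP0, hP1]; ring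
  | succ j ih =>
    have hj := hP j (by omega)
    have hj1 := hP (j + 1) le_rfl
    have hstep : P (j + 1) / P j * a j ^ 2 + (a (j + 1) - a j) ^ 2 + a (j + 1) ^ 2 - a j ^ 2
          - μ * a (j + 1) ^ 2 =
        (P (j + 1) * a j - P j * a (j + 1)) ^ 2 / (P j * P (j + 1))
          + P (j + 2) / P (j + 1) * a (j + 1) ^ 2 := by
      rw [hrec]
      field_simp
      ring
    have ih := ih fun k hk => hP k (by omega)
    rw [jacobiForm] at ih ⊢
    rw [sum_range_succ _ j, sum_range_succ _ j, sum_range_succ _ (j + 1), mul_add]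
    linear_combination ih + hstep

lemma mul_sum_sq_le_jacobiForm (hP0 : P 0 = 1) (hP1 : P 1 = c - μ)
    (hrec : ∀ k, P (k + 2) = (2 - μ) * P (k + 1) - P k) {n : ℕ} (hpos : ∀ k < n, 0 < P k)
    (hPn : P n = 0) {a : ℕ → ℝ} (ha : a n = 0) :
    μ * ∑ k ∈ range n, a k ^ 2 ≤ jacobiForm c a n := by
  obtain _ | m := n
  · simp [hP0] at hPn
  have h := jacobiForm_add_sq_sub_mul_sum_sq hP0 hP1 hrec a (j := m)
    fun k hk => (hpos k (by omega)).ne'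
  rw [hPn, zero_div, zero_mul, add_zero] at h
  have hsos : 0 ≤ ∑ k ∈ range m, (P (k + 1) * a k - P k * a (k + 1)) ^ 2 / (P k * P (k + 1)) :=
    sum_nonneg fun k hk => by
      have hk := mem_range.1 hk
      exact div_nonneg (sq_nonneg _) (mul_pos (hpos k (by omega)) (hpos (k + 1) (by omega))).le
  rw [jacobiForm] at h ⊢
  rw [sum_range_succ (fun k => (a (k + 1) - a k) ^ 2) m, ha]
  linarith

end JacobiForm

lemma derivative_sum_smul_laguerre (n : ℕ) (b : ℕ → ℝ) :
    derivative (∑ k ∈ range (n + 1), b k • laguerre k) =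
      -∑ j ∈ range n, (∑ k ∈ Ioc j n, b k) • laguerre j := by
  simp_rw [derivative_sum, derivative_smul, derivative_laguerre, smul_neg, sum_neg_distrib,
    smul_sum, sum_smul]
  congr 1
  exact sum_comm' fun k j => by simp only [mem_range, mem_Ioc]; omega

lemma integral_sq_sum_smul_laguerre_mul_exp_neg (s : Finset ℕ) (b : ℕ → ℝ) :
    ∫ x in Set.Ioi (0 : ℝ), (∑ k ∈ s, b k • laguerre k).eval x ^ 2 * Real.exp (-x) =
      ∑ k ∈ s, b k ^ 2 := by
  rw [← expMoment_sq_sum_smul_laguerre, ← integral_eval_mul_exp_neg]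
  simp only [eval_pow]

lemma mul_sum_sq_sum_Ioc_le {M μ : ℝ} (hM : 0 ≤ M) {n : ℕ}
    (hpos : ∀ j < n, 0 < signedApolyB M j μ) (hroot : (ApolyB M n).eval μ = 0) (b : ℕ → ℝ) :
    μ * ∑ j ∈ range n, (∑ k ∈ Ioc j n, b k) ^ 2 ≤
      ∑ k ∈ range (n + 1), b k ^ 2 + M * (∑ k ∈ range (n + 1), b k) ^ 2 := by
  set a : ℕ → ℝ := fun j => ∑ k ∈ Ioc j n, b k
  have hb : ∀ j < n, b (j + 1) = a j - a (j + 1) := fun j hj => by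
    have hIoc : Ioc j n = cons (j + 1) (Ioc (j + 1) n) (by simp) := by
      rw [← Icc_add_one_left_eq_Ioc, Icc_eq_cons_Ioc (by omega)]
    simp only [a, hIoc, sum_cons]
    ring
  have hjacobi := mul_sum_sq_le_jacobiForm (P := fun k => signedApolyB M k μ)
    signedApolyB_zero signedApolyB_one (fun k => signedApolyB_add_two) hpos
    (signedApolyB_eq_zero_iff.2 hroot) (a := a) (by simp [a])
  have hsum : ∑ k ∈ range (n + 1), b k = b 0 + a 0 := by
    rw [sum_range_succ', sum_congr rfl fun j hj => hb j (mem_range.1 hj), sum_range_sub']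
    simp [a, add_comm]
  have hsq : ∑ k ∈ range (n + 1), b k ^ 2 = b 0 ^ 2 + ∑ k ∈ range n, (a (k + 1) - a k) ^ 2 := by
    rw [sum_range_succ', add_comm]
    congr 1
    exact sum_congr rfl fun j hj => by rw [hb j (mem_range.1 hj)]; ring
  rw [jacobiForm] at hjacobi
  have h0 : ((1 + 2 * M) / (1 + M) - 1) * a 0 ^ 2 ≤ b 0 ^ 2 + M * (b 0 + a 0) ^ 2 := by
    rw [show (1 + 2 * M) / (1 + M) - 1 = M / (1 + M) by field_simp; ring, div_mul_eq_mul_div,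
      div_le_iff₀ (by linarith)]
    nlinarith [sq_nonneg ((1 + M) * b 0 + M * a 0)]
  rw [hsum, hsq]
  linarith

theorem stmt8 (M : ℝ) (hM : 0 ≤ M) (n : ℕ) (hn : 1 ≤ n) :
    (∃ x : ℝ, (ApolyB M n).eval x = 0) ∧
    (∀ x : ℝ, (ApolyB M n).eval x = 0 → 0 < x) ∧
    ∀ μ : ℝ, IsLeast {x : ℝ | (ApolyB M n).eval x = 0} μ →
      ∀ p : Polynomial ℝ, p.degree ≤ n →
        (∫ x in Set.Ioi (0 : ℝ), ((Polynomial.derivative p).eval x) ^ 2 * Real.exp (-x)) ≤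
          (1 / μ) * ((∫ x in Set.Ioi (0 : ℝ), (p.eval x) ^ 2 * Real.exp (-x)) +
            M * (p.eval 0) ^ 2) := by
  obtain ⟨m, rfl⟩ := Nat.exists_eq_add_of_le' hn
  obtain ⟨μ₀, hleast, hpos⟩ := exists_isLeast_roots_ApolyB hM m
  refine ⟨⟨μ₀, hleast.1⟩, fun x hx => pos_of_eval_ApolyB_eq_zero hM hx, fun μ hμ p hp => ?_⟩
  obtain rfl := hμ.unique hleast
  obtain ⟨b, rfl⟩ := exists_laguerre_expansion hp
  simp only [derivative_sum_smul_laguerre, eval_neg, neg_sq]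
  rw [integral_sq_sum_smul_laguerre_mul_exp_neg, integral_sq_sum_smul_laguerre_mul_exp_neg,
    eval_finsetSum]
  simp only [eval_smul, eval_zero_laguerre, smul_eq_mul, mul_one]
  rw [one_div, inv_mul_eq_div, le_div_iff₀ (pos_of_eval_ApolyB_eq_zero hM hμ.1), mul_comm]
  exact mul_sum_sq_sum_Ioc_le hM (fun j hj => hpos j (Nat.lt_succ_iff.1 hj) μ le_rfl) hμ.1 b
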